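/- arXiv:1407.5961 — 2 statements merged into one kernel-verified Lean document; each statement's English description precedes it below -/
import Mathlib

section
/- In a conservative abstraction G^a of a concrete game G, for any set S^a of abstract states, γ(upre_under(S^a)) ⊆ upre(γ(S^a)) ⊆ γ(upre_over(S^a)). -/
/-! A concrete successor `δ q σu σc` lies in some block `r` of the partition, and `q ∈ s`
witnesses the abstract transition `(s, σu, σc, r)`. For the under-approximation this forces
`r ∈ Sa`; for the over-approximation the block of `Sa` containing the successor is the
required `r`. -/

/-- Abstract transition relation: existential lift of the concrete transition function
to blocks of the partition `P`. -/
def absDelta {Q Au Ac : Type*} (δ : Q → Au → Ac → Q) (P : Set (Set Q))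
    (s : Set Q) (σu : Au) (σc : Ac) (s' : Set Q) : Prop :=
  s ∈ P ∧ s' ∈ P ∧ ∃ q ∈ s, δ q σu σc ∈ s'

namespace AbstractGame

variable {Q Au Ac : Type*} (δ : Q → Au → Ac → Q) (P : Set (Set Q))

def upre (S : Set Q) : Set Q :=
  {q | ∃ σu, ∀ σc, δ q σu σc ∈ S}

def upreOver (Sa : Set (Set Q)) : Set (Set Q) :=
  {qa ∈ P | ∃ σu, ∀ σc, ∃ ra ∈ Sa, absDelta δ P qa σu σc ra}

def upreUnder (Sa : Set (Set Q)) : Set (Set Q) :=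
  {qa ∈ P | ∃ σu, ∀ σc, ∀ ra, absDelta δ P qa σu σc ra → ra ∈ Sa}

variable {δ P}

theorem sUnion_upreUnder_subset_upre (hP : ⋃₀ P = Set.univ) (Sa : Set (Set Q)) :
    ⋃₀ upreUnder δ P Sa ⊆ upre δ (⋃₀ Sa) := by
  rintro q ⟨qa, ⟨hqaP, σu, hforce⟩, hq⟩
  refine ⟨σu, fun σc => ?_⟩
  obtain ⟨ra, hraP, hsucc⟩ := Set.mem_sUnion.1 (hP ▸ Set.mem_univ (δ q σu σc))
  exact ⟨ra, hforce σc ra ⟨hqaP, hraP, q, hq, hsucc⟩, hsucc⟩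

theorem upre_subset_sUnion_upreOver (hP : ⋃₀ P = Set.univ) {Sa : Set (Set Q)}
    (hSa : Sa ⊆ P) : upre δ (⋃₀ Sa) ⊆ ⋃₀ upreOver δ P Sa := by
  rintro q ⟨σu, hforce⟩
  obtain ⟨qa, hqaP, hq⟩ := Set.mem_sUnion.1 (hP ▸ Set.mem_univ q)
  refine ⟨qa, ⟨hqaP, σu, fun σc => ?_⟩, hq⟩
  obtain ⟨ra, hra, hsucc⟩ := hforce σc
  exact ⟨ra, hra, hqaP, hSa hra, q, hq, hsucc⟩

end AbstractGame

theorem stmt_4_general {Q Au Ac : Type*}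
    (δ : Q → Au → Ac → Q) (P : Set (Set Q)) (hP : Setoid.IsPartition P)
    (Sa : Set (Set Q)) (hSa : Sa ⊆ P) :
    let γ : Set (Set Q) → Set Q := Set.sUnion
    let upre : Set Q → Set Q := fun S => {q | ∃ σu : Au, ∀ σc : Ac, δ q σu σc ∈ S}
    let upreOver : Set (Set Q) :=
      {qa ∈ P | ∃ σu : Au, ∀ σc : Ac, ∃ ra ∈ Sa, absDelta δ P qa σu σc ra}
    let upreUnder : Set (Set Q) :=
      {qa ∈ P | ∃ σu : Au, ∀ σc : Ac, ∀ ra, absDelta δ P qa σu σc ra → ra ∈ Sa}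
    γ upreUnder ⊆ upre (γ Sa) ∧ upre (γ Sa) ⊆ γ upreOver :=
  ⟨AbstractGame.sUnion_upreUnder_subset_upre hP.sUnion_eq_univ Sa,
    AbstractGame.upre_subset_sUnion_upreOver hP.sUnion_eq_univ hSa⟩

theorem stmt_4 {Q Au Ac : Type*} [Fintype Q] [Fintype Au] [Fintype Ac]
    (δ : Q → Au → Ac → Q) (P : Set (Set Q)) (hP : Setoid.IsPartition P)
    (Sa : Set (Set Q)) (hSa : Sa ⊆ P) :
    let γ : Set (Set Q) → Set Q := Set.sUnion
    let upre : Set Q → Set Q := fun S => {q | ∃ σu : Au, ∀ σc : Ac, δ q σu σc ∈ S}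
    let upreOver : Set (Set Q) :=
      {qa ∈ P | ∃ σu : Au, ∀ σc : Ac, ∃ ra ∈ Sa, absDelta δ P qa σu σc ra}
    let upreUnder : Set (Set Q) :=
      {qa ∈ P | ∃ σu : Au, ∀ σc : Ac, ∀ ra, absDelta δ P qa σu σc ra → ra ∈ Sa}
    γ upreUnder ⊆ upre (γ Sa) ∧ upre (γ Sa) ⊆ γ upreOver :=
  stmt_4_general δ P hP Sa hSa
end

section
/- In a conservative abstraction G^a of a finite game G with unsafe set U and abstract unsafe set U^a satisfying U ⊆ γ(U^a) and γ(U^a) ⊆ upre*(U), the least fixpoints satisfy γ(μX.(U^a ∪ upre_under(X))) ⊆ upre*(U) ⊆ γ(μX.(U^a ∪ upre_over(X))). -/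
/-- Concrete uncontrollable predecessors. -/
def upre {Q Au Ac : Type*} (δ : Q → Au → Ac → Q) (S : Set Q) : Set Q :=
  {q | ∃ σu : Au, ∀ σc : Ac, δ q σu σc ∈ S}

/-- Over-approximating abstract uncontrollable predecessors. -/
def upreOver {Q Au Ac : Type*} (δ : Q → Au → Ac → Q) (P : Set (Set Q))
    (Sa : Set (Set Q)) : Set (Set Q) :=
  {qa ∈ P | ∃ σu : Au, ∀ σc : Ac, ∃ ra ∈ Sa, absDelta δ P qa σu σc ra}

/-- Under-approximating abstract uncontrollable predecessors. -/
def upreUnder {Q Au Ac : Type*} (δ : Q → Au → Ac → Q) (P : Set (Set Q))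
    (Sa : Set (Set Q)) : Set (Set Q) :=
  {qa ∈ P | ∃ σu : Au, ∀ σc : Ac, ∀ ra, absDelta δ P qa σu σc ra → ra ∈ Sa}

/-- Least fixpoint of a set operator, à la Knaster–Tarski (intersection of prefixed points). -/
def lfpSet {α : Type*} (F : Set α → Set α) : Set α := ⋂₀ {X | F X ⊆ X}

section LfpSet

variable {α : Type*}

theorem lfpSet_subset {F : Set α → Set α} {X : Set α} (h : F X ⊆ X) : lfpSet F ⊆ X :=
  fun _ ha => ha X h

theorem map_lfpSet_subset {F : Set α → Set α} (hF : Monotone F) : F (lfpSet F) ⊆ lfpSet F :=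
  (OrderHom.map_lfp ⟨F, hF⟩).le

end LfpSet

section Upre

variable {Q Au Ac : Type*} (δ : Q → Au → Ac → Q) (P : Set (Set Q))

theorem upre_mono : Monotone (upre δ : Set Q → Set Q) :=
  fun _ _ hST _ ⟨σu, hσu⟩ => ⟨σu, fun σc => hST (hσu σc)⟩

theorem upreOver_mono : Monotone (upreOver δ P) :=
  fun _ _ hST _ ⟨hqa, σu, hσu⟩ =>
    ⟨hqa, σu, fun σc => (hσu σc).imp fun _ ⟨hra, habs⟩ => ⟨hST hra, habs⟩⟩

theorem upreOver_subset (Sa : Set (Set Q)) : upreOver δ P Sa ⊆ P := fun _ h => h.1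

variable {P}

theorem sUnion_upreUnder_subset_upre (hP : ⋃₀ P = Set.univ) (Sa : Set (Set Q)) :
    ⋃₀ upreUnder δ P Sa ⊆ upre δ (⋃₀ Sa) := by
  rintro q ⟨qa, ⟨hqaP, σu, hσu⟩, hq⟩
  refine ⟨σu, fun σc => ?_⟩
  obtain ⟨rb, hrbP, hrb⟩ : δ q σu σc ∈ ⋃₀ P := hP ▸ Set.mem_univ _
  exact ⟨rb, hσu σc rb ⟨hqaP, hrbP, q, hq, hrb⟩, hrb⟩

theorem upre_subset_sUnion_upreOver (hP : ⋃₀ P = Set.univ) {Sa : Set (Set Q)} (hSa : Sa ⊆ P) :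
    upre δ (⋃₀ Sa) ⊆ ⋃₀ upreOver δ P Sa := by
  rintro q ⟨σu, hσu⟩
  obtain ⟨qa, hqaP, hq⟩ : q ∈ ⋃₀ P := hP ▸ Set.mem_univ _
  refine ⟨qa, ⟨hqaP, σu, fun σc => ?_⟩, hq⟩
  obtain ⟨ra, hra, hδ⟩ := hσu σc
  exact ⟨ra, hra, hqaP, hSa hra, q, hq, hδ⟩

end Upre

theorem stmt_5_general {Q Au Ac : Type*}
    (δ : Q → Au → Ac → Q) (P : Set (Set Q)) (hP : Setoid.IsPartition P)
    (U : Set Q) (Ua : Set (Set Q)) (hUa : Ua ⊆ P)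
    (hU1 : U ⊆ ⋃₀ Ua) (hU2 : ⋃₀ Ua ⊆ lfpSet (fun X => U ∪ upre δ X)) :
    ⋃₀ lfpSet (fun X => Ua ∪ upreUnder δ P X) ⊆ lfpSet (fun X => U ∪ upre δ X) ∧
      lfpSet (fun X => U ∪ upre δ X) ⊆ ⋃₀ lfpSet (fun X => Ua ∪ upreOver δ P X) := by
  have hcover := hP.sUnion_eq_univ
  set W := lfpSet (fun X => U ∪ upre δ X)
  set La := lfpSet (fun X => Ua ∪ upreOver δ P X)
  have hW : U ∪ upre δ W ⊆ W := map_lfpSet_subset (monotone_const.union (upre_mono δ))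
  have hLa : Ua ∪ upreOver δ P La ⊆ La :=
    map_lfpSet_subset (monotone_const.union (upreOver_mono δ P))
  have hLaP : La ⊆ P := lfpSet_subset (Set.union_subset hUa (upreOver_subset δ P _))
  constructor
  · rw [← Set.subset_powerset_iff]
    refine lfpSet_subset ?_
    rw [Set.subset_powerset_iff, Set.sUnion_union]
    exact Set.union_subset hU2 <| (sUnion_upreUnder_subset_upre δ hcover _).trans <|
      (upre_mono δ (Set.subset_powerset_iff.1 subset_rfl)).trans
        (Set.subset_union_right.trans hW)
  · refine lfpSet_subset (Set.union_subset ?_ ?_)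
    · exact hU1.trans (Set.sUnion_mono (Set.subset_union_left.trans hLa))
    · exact (upre_subset_sUnion_upreOver δ hcover hLaP).trans
        (Set.sUnion_mono (Set.subset_union_right.trans hLa))

theorem stmt_5 {Q Au Ac : Type*} [Fintype Q] [Fintype Au] [Fintype Ac]
    (δ : Q → Au → Ac → Q) (P : Set (Set Q)) (hP : Setoid.IsPartition P)
    (U : Set Q) (Ua : Set (Set Q)) (hUa : Ua ⊆ P)
    (hU1 : U ⊆ ⋃₀ Ua) (hU2 : ⋃₀ Ua ⊆ lfpSet (fun X => U ∪ upre δ X)) :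
    ⋃₀ lfpSet (fun X => Ua ∪ upreUnder δ P X) ⊆ lfpSet (fun X => U ∪ upre δ X) ∧
      lfpSet (fun X => U ∪ upre δ X) ⊆ ⋃₀ lfpSet (fun X => Ua ∪ upreOver δ P X) :=
  stmt_5_general δ P hP U Ua hUa hU1 hU2
end
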